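/- arXiv:2002.02892 — 3 statements merged into one kernel-verified Lean document; each statement's English description precedes it below -/
import Mathlib

section
/- Let P = ΘBΘᵀ and P' = Θ'B(Θ')ᵀ be two SBM connection probability matrices with the same connectivity matrix B = α B₀ where entries of B₀ lie in [0,1], community sizes at most n_max, and suppose only the nodes in a set S changed community between Θ and Θ'. If max_k ∑_ℓ n_ℓ (B₀)_{kℓ}² ≤ n̄_max for all admissible size vectors, then ‖P - P'‖_F² ≤ 8 |S| α² n̄_max. -/
/-!
Write `f i j = (B₀ (Θ i) (Θ j) - B₀ (Θ' i) (Θ' j))²`, so that the left-hand side is `α² ∑ᵢ ∑ⱼ f i j`.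
The entry `f i j` vanishes unless `i ∈ S` or `j ∈ S`, and `f` is symmetric because `B₀` is,
so the double sum is at most twice the sum of the rows indexed by `S`. By `(a - b)² ≤ 2a² + 2b²`,
each row sum is at most `2 nbar + 2 nbar`, which gives `2 · |S| · 4 nbar`.
-/

open Finset

lemma sub_sq_le_two_mul_sq_add_sq {R : Type*} [CommRing R] [LinearOrder R] [IsStrictOrderedRing R]
    (a b : R) : (a - b) ^ 2 ≤ 2 * (a ^ 2 + b ^ 2) := by
  simpa [sub_eq_add_neg] using add_sq_le (a := a) (b := -b)

lemma sum_sub_sq_le {ι : Type*} (s : Finset ι) (u v : ι → ℝ) :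
    ∑ j ∈ s, (u j - v j) ^ 2 ≤ 2 * (∑ j ∈ s, u j ^ 2 + ∑ j ∈ s, v j ^ 2) := by
  rw [← sum_add_distrib, mul_sum]
  exact sum_le_sum fun j _ => sub_sq_le_two_mul_sq_add_sq (u j) (v j)

lemma sum_sum_le_two_mul_sum_rows {ι : Type*} [Fintype ι] [DecidableEq ι]
    (f : ι → ι → ℝ) (hf : ∀ i j, 0 ≤ f i j) (hsymm : ∀ i j, f i j = f j i)
    (S : Finset ι) (hzero : ∀ i ∉ S, ∀ j ∉ S, f i j = 0) :
    ∑ i, ∑ j, f i j ≤ 2 * ∑ i ∈ S, ∑ j, f i j := by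
  have hcompl : ∑ i ∈ Sᶜ, ∑ j, f i j ≤ ∑ i ∈ S, ∑ j, f i j :=
    calc ∑ i ∈ Sᶜ, ∑ j, f i j = ∑ i ∈ Sᶜ, ∑ j ∈ S, f i j := by
          refine sum_congr rfl fun i hi => ?_
          rw [← sum_add_sum_compl S (f i), add_eq_left]
          exact sum_eq_zero fun j hj => hzero i (mem_compl.mp hi) j (mem_compl.mp hj)
      _ ≤ ∑ i, ∑ j ∈ S, f i j :=
          sum_le_sum_of_subset_of_nonneg (subset_univ _) fun i _ _ =>
            sum_nonneg fun j _ => hf i j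
      _ = ∑ i ∈ S, ∑ j, f i j := by
          rw [sum_comm]
          exact sum_congr rfl fun i _ => sum_congr rfl fun j _ => hsymm j i
  rw [← sum_add_sum_compl S]
  linarith

theorem stmt_8_general (n K : ℕ) (α : ℝ)
    (B₀ : Matrix (Fin K) (Fin K) ℝ) (hB₀sym : B₀.IsSymm)
    (Θ Θ' : Fin n → Fin K)
    (nbar : ℝ)
    (hbar : ∀ k, (∑ j, (B₀ k (Θ j)) ^ 2) ≤ nbar)
    (hbar' : ∀ k, (∑ j, (B₀ k (Θ' j)) ^ 2) ≤ nbar)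
    (S : Finset (Fin n)) (hS : ∀ i, Θ i ≠ Θ' i → i ∈ S) :
    ∑ i, ∑ j, (α * B₀ (Θ i) (Θ j) - α * B₀ (Θ' i) (Θ' j)) ^ 2
      ≤ 8 * (S.card : ℝ) * α ^ 2 * nbar := by
  set f : Fin n → Fin n → ℝ := fun i j => (B₀ (Θ i) (Θ j) - B₀ (Θ' i) (Θ' j)) ^ 2
  have hfactor : ∑ i, ∑ j, (α * B₀ (Θ i) (Θ j) - α * B₀ (Θ' i) (Θ' j)) ^ 2
      = α ^ 2 * ∑ i, ∑ j, f i j := by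
    simp only [f, mul_sum]
    exact sum_congr rfl fun i _ => sum_congr rfl fun j _ => by ring
  have hsymm : ∀ i j, f i j = f j i := fun i j => by
    simp only [f, ← hB₀sym.apply (Θ i), ← hB₀sym.apply (Θ' i)]
  have hzero : ∀ i ∉ S, ∀ j ∉ S, f i j = 0 := fun i hi j hj => by
    simp [f, not_not.mp (mt (hS i) hi), not_not.mp (mt (hS j) hj)]
  have hrow : ∀ i, ∑ j, f i j ≤ 4 * nbar := fun i => by
    linarith [sum_sub_sq_le univ (fun j => B₀ (Θ i) (Θ j)) (fun j => B₀ (Θ' i) (Θ' j)),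
      hbar (Θ i), hbar' (Θ' i)]
  have hS_rows : ∑ i ∈ S, ∑ j, f i j ≤ S.card * (4 * nbar) := by
    simpa using sum_le_sum fun i (_ : i ∈ S) => hrow i
  have hsum := sum_sum_le_two_mul_sum_rows f (fun i j => sq_nonneg _) hsymm S hzero
  rw [hfactor]
  calc α ^ 2 * ∑ i, ∑ j, f i j ≤ α ^ 2 * (2 * (S.card * (4 * nbar))) := by gcongr; linarith
    _ = 8 * (S.card : ℝ) * α ^ 2 * nbar := by ring

theorem stmt_8 (n K : ℕ) (α : ℝ) (hα0 : 0 < α) (hα1 : α < 1)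
    (B₀ : Matrix (Fin K) (Fin K) ℝ) (hB₀sym : B₀.IsSymm)
    (hB₀ : ∀ k l, B₀ k l ∈ Set.Icc (0 : ℝ) 1)
    (Θ Θ' : Fin n → Fin K)
    (nbar : ℝ)
    (hbar : ∀ k, (∑ j, (B₀ k (Θ j)) ^ 2) ≤ nbar)
    (hbar' : ∀ k, (∑ j, (B₀ k (Θ' j)) ^ 2) ≤ nbar)
    (S : Finset (Fin n)) (hS : ∀ i, Θ i ≠ Θ' i → i ∈ S) :
    ∑ i, ∑ j, (α * B₀ (Θ i) (Θ j) - α * B₀ (Θ' i) (Θ' j)) ^ 2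
      ≤ 8 * (S.card : ℝ) * α ^ 2 * nbar :=
  stmt_8_general n K α B₀ hB₀sym Θ Θ' nbar hbar hbar' S hS
end

section
/- Let A, P be symmetric n×n matrices with nonnegative entries, with strictly positive row sums d_i = ∑_j a_{ij} and d^P_i = ∑_j p_{ij}, and let d_min = min over i of min(d_i, d^P_i). Define L(M) = D(M)^{-1/2} M D(M)^{-1/2} where D(M) is the diagonal matrix of row sums. Then ‖L(A) - L(P)‖ ≤ ‖A - P‖/d_min + ‖(D(A) - D(P))P‖/d_min² in operator norm. -/
noncomputable def opNorm {n : ℕ} (M : Matrix (Fin n) (Fin n) ℝ) : ℝ :=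
  ‖(Matrix.toEuclideanCLM (𝕜 := ℝ) M : EuclideanSpace ℝ (Fin n) →L[ℝ] EuclideanSpace ℝ (Fin n))‖

noncomputable def rowSum {n : ℕ} (M : Matrix (Fin n) (Fin n) ℝ) (i : Fin n) : ℝ := ∑ j, M i j

noncomputable def degMat {n : ℕ} (M : Matrix (Fin n) (Fin n) ℝ) : Matrix (Fin n) (Fin n) ℝ :=
  Matrix.diagonal (rowSum M)

noncomputable def normLap {n : ℕ} (M : Matrix (Fin n) (Fin n) ℝ) : Matrix (Fin n) (Fin n) ℝ :=
  Matrix.diagonal (fun i => (Real.sqrt (rowSum M i))⁻¹) * M *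
    Matrix.diagonal (fun i => (Real.sqrt (rowSum M i))⁻¹)

/-!
Write `S = D(A)^{-1/2}` and `T = D(P)^{-1/2}`, so that
`L(A) - L(P) = S (A - P) S + (S - T) P S + T P (S - T)`.
Entrywise `1/√a - 1/√b = (b - a) / (√a √b (√a + √b))`, so `S - T = W (D(P) - D(A))` with a
diagonal `W` of norm at most `1 / (2 d_min^{3/2})`, while `‖S‖, ‖T‖ ≤ d_min^{-1/2}`. The first term
is then at most `‖A - P‖ / d_min`, and each of the other two at most
`‖(D(A) - D(P)) P‖ / (2 d_min²)`; for the last one the symmetry of `P` makes `P (D(P) - D(A))` the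
transpose of `(D(P) - D(A)) P`.
-/

open scoped Matrix.Norms.L2Operator
open Matrix

theorem norm_mul_mul_sub_mul_mul_le {R : Type*} [NonUnitalSeminormedRing R] {S T W E a p : R}
    {σ ω x : ℝ} (hS : ‖S‖ ≤ σ) (hT : ‖T‖ ≤ σ) (hW : ‖W‖ ≤ ω)
    (hWE : S - T = W * E) (hEW : S - T = E * W) (hEp : ‖E * p‖ ≤ x) (hpE : ‖p * E‖ ≤ x) :
    ‖S * a * S - T * p * T‖ ≤ σ ^ 2 * ‖a - p‖ + 2 * σ * ω * x := by
  have hσ : 0 ≤ σ := (norm_nonneg _).trans hS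
  have hω : 0 ≤ ω := (norm_nonneg _).trans hW
  have hx : 0 ≤ x := (norm_nonneg _).trans hEp
  have hdecomp :
      S * a * S - T * p * T = S * (a - p) * S + W * (E * p) * S + T * (p * E) * W := by
    calc S * a * S - T * p * T = S * (a - p) * S + (S - T) * p * S + T * p * (S - T) := by
          simp only [mul_sub, sub_mul]
          abel
      _ = S * (a - p) * S + W * (E * p) * S + T * (p * E) * W := by
          nth_rw 1 [hWE]
          rw [hEW]
          simp only [mul_assoc]
  rw [hdecomp]
  calc ‖S * (a - p) * S + W * (E * p) * S + T * (p * E) * W‖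
      ≤ ‖S‖ * ‖a - p‖ * ‖S‖ + ‖W‖ * ‖E * p‖ * ‖S‖ + ‖T‖ * ‖p * E‖ * ‖W‖ := by
        grw [norm_add₃_le, norm_mul₃_le, norm_mul₃_le, norm_mul₃_le]
    _ ≤ σ * ‖a - p‖ * σ + ω * x * σ + σ * x * ω := by gcongr
    _ = σ ^ 2 * ‖a - p‖ + 2 * σ * ω * x := by ring

theorem inv_sqrt_sub_inv_sqrt {a b : ℝ} (ha : 0 < a) (hb : 0 < b) :
    (√a)⁻¹ - (√b)⁻¹ = (√a * √b * (√a + √b))⁻¹ * (b - a) := by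
  have hsa : 0 < √a := Real.sqrt_pos.mpr ha
  have hsb : 0 < √b := Real.sqrt_pos.mpr hb
  field_simp
  nlinarith [Real.sq_sqrt ha.le, Real.sq_sqrt hb.le]

theorem mul_two_mul_sqrt_le {d a b : ℝ} (hd : 0 ≤ d) (ha : d ≤ a) (hb : d ≤ b) :
    d * (2 * √d) ≤ √a * √b * (√a + √b) := by
  have hsa : √d ≤ √a := Real.sqrt_le_sqrt ha
  have hsb : √d ≤ √b := Real.sqrt_le_sqrt hb
  have hsd : 0 ≤ √d := Real.sqrt_nonneg d
  calc d * (2 * √d) = √d * √d * (√d + √d) := by rw [Real.mul_self_sqrt hd]; ring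
    _ ≤ √a * √b * (√a + √b) := by gcongr

section Diagonal

variable {ι : Type*} [Fintype ι] [DecidableEq ι]

theorem norm_diagonal_inv_sqrt_le {d : ℝ} {a : ι → ℝ} (hd : 0 < d) (ha : ∀ i, d ≤ a i) :
    ‖diagonal fun i => (√(a i))⁻¹‖ ≤ (√d)⁻¹ := by
  rw [l2_opNorm_diagonal, pi_norm_le_iff_of_nonneg (by positivity)]
  intro i
  rw [Real.norm_of_nonneg (by positivity)]
  gcongr
  exact ha i

theorem diagonal_inv_sqrt_sub_diagonal_inv_sqrt {a b : ι → ℝ} (ha : ∀ i, 0 < a i)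
    (hb : ∀ i, 0 < b i) :
    (diagonal fun i => (√(a i))⁻¹) - diagonal (fun i => (√(b i))⁻¹) =
      diagonal (fun i => (√(a i) * √(b i) * (√(a i) + √(b i)))⁻¹) * (diagonal b - diagonal a) := by
  rw [diagonal_sub, diagonal_sub, diagonal_mul_diagonal]
  exact congrArg diagonal (funext fun i => inv_sqrt_sub_inv_sqrt (ha i) (hb i))

theorem norm_diagonal_inv_sqrt_mul_le {d : ℝ} {a b : ι → ℝ} (hd : 0 < d) (ha : ∀ i, d ≤ a i)
    (hb : ∀ i, d ≤ b i) :
    ‖diagonal fun i => (√(a i) * √(b i) * (√(a i) + √(b i)))⁻¹‖ ≤ (d * (2 * √d))⁻¹ := by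
  rw [l2_opNorm_diagonal, pi_norm_le_iff_of_nonneg (by positivity)]
  intro i
  have hpos : 0 < d * (2 * √d) := by positivity
  have hle := mul_two_mul_sqrt_le hd.le (ha i) (hb i)
  rw [Real.norm_of_nonneg (inv_nonneg.mpr (hpos.trans_le hle).le)]
  exact inv_anti₀ hpos hle

end Diagonal

theorem Matrix.l2_opNorm_transpose {m n : Type*} [Fintype m] [Fintype n] [DecidableEq m]
    [DecidableEq n] (M : Matrix m n ℝ) : ‖Mᵀ‖ = ‖M‖ := by
  rw [← conjTranspose_eq_transpose_of_trivial, l2_opNorm_conjTranspose]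

theorem stmt_9_general (n : ℕ) (A P : Matrix (Fin n) (Fin n) ℝ)
    (hPsym : P.IsSymm)
    (dmin : ℝ) (hdmin : 0 < dmin)
    (hA : ∀ i, dmin ≤ rowSum A i) (hP : ∀ i, dmin ≤ rowSum P i) :
    opNorm (normLap A - normLap P) ≤
      opNorm (A - P) / dmin + opNorm ((degMat A - degMat P) * P) / dmin ^ 2 := by
  have hEP : ‖(degMat P - degMat A) * P‖ = ‖(degMat A - degMat P) * P‖ := by
    rw [← norm_neg, ← Matrix.neg_mul, neg_sub]
  have hPE : ‖P * (degMat P - degMat A)‖ = ‖(degMat A - degMat P) * P‖ := by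
    rw [← hEP, ← l2_opNorm_transpose, transpose_mul, hPsym.eq, degMat, degMat, transpose_sub,
      diagonal_transpose, diagonal_transpose]
  have hsub := diagonal_inv_sqrt_sub_diagonal_inv_sqrt (fun i => hdmin.trans_le (hA i))
    (fun i => hdmin.trans_le (hP i))
  have hbound := norm_mul_mul_sub_mul_mul_le (a := A) (p := P)
    (norm_diagonal_inv_sqrt_le hdmin hA) (norm_diagonal_inv_sqrt_le hdmin hP)
    (norm_diagonal_inv_sqrt_mul_le hdmin hA hP) hsub
    (hsub.trans ((commute_diagonal _ _).sub_right (commute_diagonal _ _)).eq)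
    hEP.le hPE.le
  have hsd : 0 < √dmin := Real.sqrt_pos.mpr hdmin
  have hσ : (√dmin)⁻¹ ^ 2 = dmin⁻¹ := by rw [inv_pow, Real.sq_sqrt hdmin.le]
  have hσω : 2 * (√dmin)⁻¹ * (dmin * (2 * √dmin))⁻¹ = (dmin ^ 2)⁻¹ := by
    field_simp
    rw [Real.sq_sqrt hdmin.le]
  rwa [hσ, hσω, inv_mul_eq_div, inv_mul_eq_div] at hbound

theorem stmt_9 (n : ℕ) (A P : Matrix (Fin n) (Fin n) ℝ)
    (hAsym : A.IsSymm) (hPsym : P.IsSymm)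
    (hAnn : ∀ i j, 0 ≤ A i j) (hPnn : ∀ i j, 0 ≤ P i j)
    (dmin : ℝ) (hdmin : 0 < dmin)
    (hA : ∀ i, dmin ≤ rowSum A i) (hP : ∀ i, dmin ≤ rowSum P i) :
    opNorm (normLap A - normLap P) ≤
      opNorm (A - P) / dmin + opNorm ((degMat A - degMat P) * P) / dmin ^ 2 :=
  stmt_9_general n A P hPsym dmin hdmin hA hP
end

section
/- Under the Markov DSBM membership dynamics where each node independently stays in its community with probability (1-ε)^k after k steps (at least), if a_1,...,a_n are i.i.d. Bernoulli((1-ε)^k) indicators, then for any δ > 0, P((1/n)∑ a_i ≤ (1-ε)^k - δ) ≤ 2 exp(-2δ²n), and consequently with this probability ‖P_{t-k} - P_t‖_F² ≤ 8 α² n² ((1 - (1-ε)^k) + δ). -/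
open MeasureTheory ProbabilityTheory Finset Real

/-!
Hoeffding's inequality for the `[0, 1]`-valued indicators `aᵢ` of mean `p = (1 - ε)ᵏ` bounds the
probability that their empirical mean `S / n` drops to `p - δ` by `exp (-2 δ² n)`. Off that event,
every entry of `P₁ - P₂` is bounded by `α` and vanishes unless one of its two nodes changed
community, so `‖P₁ - P₂‖_F² ≤ α² (n² - S²) ≤ 2 α² n (n - S) < 2 α² n² (1 - p + δ)`.
-/

theorem sq_sub_le_sq_of_mem_Icc {x y α : ℝ} (hx : x ∈ Set.Icc 0 α) (hy : y ∈ Set.Icc 0 α) :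
    (x - y) ^ 2 ≤ α ^ 2 :=
  sq_le_sq' (by linarith [hx.1, hy.2]) (by linarith [hx.2, hy.1])

theorem sum_sq_sub_le_of_eq_on_ones {ι : Type*} [Fintype ι] {α : ℝ} (u : ι → ℝ)
    (hu : ∀ i, u i = 0 ∨ u i = 1) (A B : Matrix ι ι ℝ)
    (hA : ∀ i j, A i j ∈ Set.Icc 0 α) (hB : ∀ i j, B i j ∈ Set.Icc 0 α)
    (hAB : ∀ i j, u i = 1 → u j = 1 → A i j = B i j) :
    ∑ i, ∑ j, (A i j - B i j) ^ 2 ≤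
      2 * α ^ 2 * Fintype.card ι * (Fintype.card ι - ∑ i, u i) := by
  have hentry : ∀ i j, (A i j - B i j) ^ 2 ≤ α ^ 2 * (1 - u i * u j) := by
    intro i j
    rcases hu i with hi | hi
    · simpa [hi] using sq_sub_le_sq_of_mem_Icc (hA i j) (hB i j)
    rcases hu j with hj | hj
    · simpa [hj] using sq_sub_le_sq_of_mem_Icc (hA i j) (hB i j)
    simp [hAB i j hi hj, hi, hj]
  set N : ℝ := (Fintype.card ι : ℝ)
  set S := ∑ i, u i
  have hS0 : 0 ≤ S := sum_nonneg fun i _ => by rcases hu i with h | h <;> simp [h]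
  have hSN : S ≤ N := by
    have hu1 : ∀ i ∈ univ, u i ≤ 1 := fun i _ => by rcases hu i with h | h <;> simp [h]
    simpa [N] using sum_le_sum hu1
  calc ∑ i, ∑ j, (A i j - B i j) ^ 2
      ≤ ∑ i, ∑ j, α ^ 2 * (1 - u i * u j) :=
        sum_le_sum fun i _ => sum_le_sum fun j _ => hentry i j
    _ = α ^ 2 * ((N - S) * (N + S)) := by
      simp only [mul_sub, sum_sub_distrib, ← mul_sum, ← sum_mul, sum_const, card_univ,
        nsmul_eq_mul, mul_one, N, S]
      ring
    _ ≤ α ^ 2 * ((N - S) * (2 * N)) := by gcongr; linarith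
    _ = 2 * α ^ 2 * N * (N - S) := by ring

theorem integral_eq_measureReal_of_eq_zero_or_one {Ω : Type*} [MeasurableSpace Ω]
    {μ : Measure Ω} {X : Ω → ℝ} (hX : ∀ ω, X ω = 0 ∨ X ω = 1) (hm : Measurable X) :
    μ[X] = μ.real {ω | X ω = 1} := by
  have : X = {ω | X ω = 1}.indicator 1 := by
    ext ω
    rcases hX ω with h | h <;> simp [h]
  conv_lhs => rw [this]
  exact integral_indicator_one (hm (measurableSet_singleton 1))

theorem measureReal_sum_le_mul_sub_le {Ω ι : Type*} [MeasurableSpace Ω] [Fintype ι]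
    {μ : Measure Ω} [IsProbabilityMeasure μ] {X : ι → Ω → ℝ} (hind : iIndepFun X μ)
    (hm : ∀ i, Measurable (X i)) (hX : ∀ i ω, X i ω ∈ Set.Icc 0 1) {p : ℝ}
    (hmean : ∀ i, μ[X i] = p) {δ : ℝ} (hδ : 0 ≤ δ) :
    μ.real {ω | ∑ i, X i ω ≤ Fintype.card ι * (p - δ)} ≤
      exp (-2 * δ ^ 2 * Fintype.card ι) := by
  -- Hoeffding's lemma: a `[0, 1]`-valued variable minus its mean is `1 / 4`-sub-Gaussian
  have hsubG : ∀ i ∈ (univ : Finset ι),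
      HasSubgaussianMGF (fun ω => p - X i ω) (1 / 4) μ := fun i _ => by
    convert (hasSubgaussianMGF_of_mem_Icc (μ := μ) (hm i).aemeasurable (ae_of_all _ (hX i))).neg
      using 1
    · ext ω
      simp [hmean i]
    · norm_num
  have hind' : iIndepFun (fun i ω => p - X i ω) μ :=
    hind.comp (fun _ x => p - x) fun _ => by fun_prop
  have hHoeffding := HasSubgaussianMGF.measure_sum_ge_le_of_iIndepFun hind' hsubG
    (mul_nonneg (Nat.cast_nonneg (Fintype.card ι)) hδ)
  have hset : {ω | ∑ i, X i ω ≤ Fintype.card ι * (p - δ)} =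
      {ω | Fintype.card ι * δ ≤ ∑ i, (p - X i ω)} := by
    ext ω
    simp only [Set.mem_ofPred_eq, sum_sub_distrib, sum_const, card_univ, nsmul_eq_mul]
    constructor <;> intro h <;> linarith
  have hexp : -(Fintype.card ι * δ) ^ 2 / (2 * ((∑ _i : ι, 1 / 4 : NNReal) : ℝ)) =
      -2 * δ ^ 2 * Fintype.card ι := by
    rcases eq_or_ne (Fintype.card ι : ℝ) 0 with hn | hn
    · simp [hn]
    · push_cast
      simp only [sum_const, card_univ, nsmul_eq_mul]
      field_simp
      ring
  rwa [hset, ← hexp]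

theorem measureReal_mean_le_sub_le {Ω ι : Type*} [MeasurableSpace Ω] [Fintype ι]
    {μ : Measure Ω} [IsProbabilityMeasure μ] {X : ι → Ω → ℝ} (hind : iIndepFun X μ)
    (hm : ∀ i, Measurable (X i)) (hX : ∀ i ω, X i ω ∈ Set.Icc 0 1) {p : ℝ}
    (hmean : ∀ i, μ[X i] = p) {δ : ℝ} (hδ : 0 ≤ δ) :
    μ.real {ω | 1 / (Fintype.card ι : ℝ) * ∑ i, X i ω ≤ p - δ} ≤
      exp (-2 * δ ^ 2 * Fintype.card ι) := by
  refine le_trans (measureReal_mono fun ω hω => ?_)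
    (measureReal_sum_le_mul_sub_le hind hm hX hmean hδ)
  rcases isEmpty_or_nonempty ι with hι | hι
  · simp
  · have hN : (0 : ℝ) < Fintype.card ι := by exact_mod_cast Fintype.card_pos
    simp only [Set.mem_ofPred_eq, one_div, inv_mul_le_iff₀ hN] at hω ⊢
    exact hω

theorem sum_sq_sub_le_of_lt_mean {ι : Type*} [Fintype ι] {α q : ℝ} (u : ι → ℝ)
    (hu : ∀ i, u i = 0 ∨ u i = 1) (A B : Matrix ι ι ℝ)
    (hA : ∀ i j, A i j ∈ Set.Icc 0 α) (hB : ∀ i j, B i j ∈ Set.Icc 0 α)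
    (hAB : ∀ i j, u i = 1 → u j = 1 → A i j = B i j)
    (hq : q < 1 / (Fintype.card ι : ℝ) * ∑ i, u i) :
    ∑ i, ∑ j, (A i j - B i j) ^ 2 ≤ 2 * α ^ 2 * Fintype.card ι ^ 2 * (1 - q) := by
  have hNq : Fintype.card ι * q ≤ ∑ i, u i := by
    rcases isEmpty_or_nonempty ι with hι | hι
    · simp
    · have hN : (0 : ℝ) < Fintype.card ι := by exact_mod_cast Fintype.card_pos
      rw [one_div, lt_inv_mul_iff₀ hN] at hq
      exact hq.le
  calc ∑ i, ∑ j, (A i j - B i j) ^ 2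
      ≤ 2 * α ^ 2 * Fintype.card ι * (Fintype.card ι - ∑ i, u i) :=
        sum_sq_sub_le_of_eq_on_ones u hu A B hA hB hAB
    _ ≤ 2 * α ^ 2 * Fintype.card ι * (Fintype.card ι - Fintype.card ι * q) := by gcongr
    _ = 2 * α ^ 2 * Fintype.card ι ^ 2 * (1 - q) := by ring

theorem stmt_12_general {Ω : Type*} [MeasurableSpace Ω] (Pr : Measure Ω) [IsProbabilityMeasure Pr]
    (n k : ℕ) (ε : ℝ) (hε1 : ε ≤ 1)
    (a : Fin n → Ω → ℝ)
    (hval : ∀ i ω, a i ω = 0 ∨ a i ω = 1)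
    (hmeas : ∀ i, Measurable (a i))
    (hind : iIndepFun a Pr)
    (hpa : ∀ i, Pr {ω | a i ω = 1} = ENNReal.ofReal ((1 - ε) ^ k))
    (δ : ℝ) (hδ : 0 < δ)
    (α : ℝ)
    (P₁ P₂ : Ω → Matrix (Fin n) (Fin n) ℝ)
    (hP₁ : ∀ ω i j, 0 ≤ P₁ ω i j ∧ P₁ ω i j ≤ α)
    (hP₂ : ∀ ω i j, 0 ≤ P₂ ω i j ∧ P₂ ω i j ≤ α)
    (hagree : ∀ ω i j, a i ω = 1 → a j ω = 1 → P₁ ω i j = P₂ ω i j) :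
    Pr {ω | (1 / (n : ℝ)) * ∑ i, a i ω ≤ (1 - ε) ^ k - δ} ≤
        ENNReal.ofReal (2 * Real.exp (-2 * δ ^ 2 * n)) ∧
      Pr {ω | ¬ (∑ i, ∑ j, (P₁ ω i j - P₂ ω i j) ^ 2 ≤
          8 * α ^ 2 * (n : ℝ) ^ 2 * ((1 - (1 - ε) ^ k) + δ))} ≤
        ENNReal.ofReal (2 * Real.exp (-2 * δ ^ 2 * n)) := by
  set p := (1 - ε) ^ k
  have hp : 0 ≤ p := pow_nonneg (by linarith) k
  have hmean : ∀ i, Pr[a i] = p := fun i => by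
    rw [integral_eq_measureReal_of_eq_zero_or_one (hval i) (hmeas i), measureReal_def, hpa i,
      ENNReal.toReal_ofReal hp]
  have hHoeffding := measureReal_mean_le_sub_le hind hmeas
    (fun i ω => by rcases hval i ω with h | h <;> simp [h]) hmean hδ.le
  simp only [Fintype.card_fin] at hHoeffding
  have hlow : Pr {ω | (1 / (n : ℝ)) * ∑ i, a i ω ≤ p - δ} ≤
      ENNReal.ofReal (2 * Real.exp (-2 * δ ^ 2 * n)) := by
    rw [ENNReal.le_ofReal_iff_toReal_le (measure_ne_top _ _) (by positivity), ← measureReal_def]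
    linarith [Real.exp_pos (-2 * δ ^ 2 * n)]
  refine ⟨hlow, le_trans (measure_mono fun ω hω => ?_) hlow⟩
  by_contra hmean_gt
  rw [Set.mem_ofPred_eq, not_le] at hmean_gt
  have hbound := sum_sq_sub_le_of_lt_mean (a · ω) (hval · ω) (P₁ ω) (P₂ ω)
    (fun i j => hP₁ ω i j) (fun i j => hP₂ ω i j) (hagree ω) (by rwa [Fintype.card_fin])
  rw [Fintype.card_fin] at hbound
  have hnonneg : 0 ≤ ∑ i, ∑ j, (P₁ ω i j - P₂ ω i j) ^ 2 := by positivity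
  exact hω (by linarith)

theorem stmt_12 {Ω : Type*} [MeasurableSpace Ω] (Pr : Measure Ω) [IsProbabilityMeasure Pr]
    (n k : ℕ) (ε : ℝ) (hε0 : 0 ≤ ε) (hε1 : ε ≤ 1)
    (a : Fin n → Ω → ℝ)
    (hval : ∀ i ω, a i ω = 0 ∨ a i ω = 1)
    (hmeas : ∀ i, Measurable (a i))
    (hind : iIndepFun a Pr)
    (hpa : ∀ i, Pr {ω | a i ω = 1} = ENNReal.ofReal ((1 - ε) ^ k))
    (δ : ℝ) (hδ : 0 < δ)
    (α : ℝ) (hα : 0 ≤ α)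
    (P₁ P₂ : Ω → Matrix (Fin n) (Fin n) ℝ)
    (hP₁ : ∀ ω i j, 0 ≤ P₁ ω i j ∧ P₁ ω i j ≤ α)
    (hP₂ : ∀ ω i j, 0 ≤ P₂ ω i j ∧ P₂ ω i j ≤ α)
    (hagree : ∀ ω i j, a i ω = 1 → a j ω = 1 → P₁ ω i j = P₂ ω i j) :
    Pr {ω | (1 / (n : ℝ)) * ∑ i, a i ω ≤ (1 - ε) ^ k - δ} ≤
        ENNReal.ofReal (2 * Real.exp (-2 * δ ^ 2 * n)) ∧
      Pr {ω | ¬ (∑ i, ∑ j, (P₁ ω i j - P₂ ω i j) ^ 2 ≤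
          8 * α ^ 2 * (n : ℝ) ^ 2 * ((1 - (1 - ε) ^ k) + δ))} ≤
        ENNReal.ofReal (2 * Real.exp (-2 * δ ^ 2 * n)) :=
  stmt_12_general Pr n k ε hε1 a hval hmeas hind hpa δ hδ α P₁ P₂ hP₁ hP₂ hagree
end
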